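/- arXiv:2106.10911 — 3 statements merged into one kernel-verified Lean document; each statement's English description precedes it below -/
import Mathlib

section
/- Let f = f¹ + f² with f¹, f² smooth vector fields on ℝᴰ, and let φ_{τ,h,g} denote the time-h flow of y' = g(t,y) starting at time τ. Then the splitting scheme Φˢ_{τ,h,f} = φ_{τ,h,f²} ∘ φ_{τ,h,f¹} is a first-order integrator: on any compact U and compact time interval there is C with ‖Φˢ_{τ,h,f} − φ_{τ,h,f}‖_U ≤ C h² for all sufficiently small h > 0. -/
open Set

lemma stmt8_norm_le_sub_add {E : Type*} [SeminormedAddGroup E] (a b : E) :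
    ‖a‖ ≤ ‖a - b‖ + ‖b‖ := by
  simpa using norm_add_le (a - b) b

/-- Auxiliary "stay in a ball" lemma: if a curve has derivative bounded by `M`
as long as it stays within distance `r` of its start, and `M * h < r`, then on
`[0, h]` it satisfies `‖g u - g 0‖ ≤ M * u`. -/
lemma stmt8_stay {E : Type*} [NormedAddCommGroup E] [NormedSpace ℝ E]
    (g F : ℝ → E) (hd : ∀ u, HasDerivAt g (F u) u)
    {M r h : ℝ} (hM : 0 ≤ M) (hh : 0 ≤ h) (hMh : M * h < r)
    (hF : ∀ u ∈ Icc (0:ℝ) h, ‖g u - g 0‖ ≤ r → ‖F u‖ ≤ M) :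
    ∀ u ∈ Icc (0:ℝ) h, ‖g u - g 0‖ ≤ M * u := by
  have hgc : Continuous g := continuous_iff_continuousAt.2 fun u => (hd u).continuousAt
  set S : Set ℝ := {u | ‖g u - g 0‖ ≤ M * u} with hS
  have hScl : IsClosed S :=
    isClosed_le ((hgc.sub continuous_const).norm) (continuous_const.mul continuous_id)
  have key : Icc (0:ℝ) h ⊆ S := by
    apply (hScl.inter isClosed_Icc).Icc_subset_of_forall_exists_gt
    · show ‖g 0 - g 0‖ ≤ M * 0
      simp
    · rintro u ⟨huS, hu0, huh⟩ y hy
      have huS' : ‖g u - g 0‖ ≤ M * u := huS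
      have hgur : ‖g u - g 0‖ < r := by
        refine lt_of_le_of_lt huS' (lt_of_le_of_lt ?_ hMh)
        exact mul_le_mul_of_nonneg_left (le_of_lt huh) hM
      have hO : IsOpen {v : ℝ | ‖g v - g 0‖ < r} :=
        isOpen_lt ((hgc.sub continuous_const).norm) continuous_const
      obtain ⟨ε, hε, hball⟩ := Metric.isOpen_iff.1 hO u hgur
      set w := min (min y (u + ε / 2)) h with hw
      have hwu : u < w := lt_min (lt_min hy (by linarith)) huh
      have hwh : w ≤ h := min_le_right _ _
      have hwε : w ≤ u + ε / 2 := le_trans (min_le_left _ _) (min_le_right _ _)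
      have hwy : w ≤ y := le_trans (min_le_left _ _) (min_le_left _ _)
      have hseg : ∀ v ∈ Icc u w, ‖g v - g u‖ ≤ M * (v - u) := by
        apply norm_image_sub_le_of_norm_deriv_le_segment'
          (fun v _ => (hd v).hasDerivWithinAt)
        intro v hv
        apply hF
        · exact ⟨le_trans hu0 hv.1, lt_of_lt_of_le hv.2 hwh |>.le⟩
        · have hvball : v ∈ Metric.ball u ε := by
            rw [Metric.mem_ball, Real.dist_eq, abs_of_nonneg (by linarith [hv.1])]
            have := hv.2
            linarith
          exact le_of_lt (hball hvball)
      refine ⟨w, ?_, hwu, hwy⟩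
      show ‖g w - g 0‖ ≤ M * w
      calc ‖g w - g 0‖ ≤ ‖g w - g u‖ + ‖g u - g 0‖ := norm_sub_le_norm_sub_add_norm_sub _ _ _
        _ ≤ M * (w - u) + M * u := by
            exact add_le_add (hseg w ⟨hwu.le, le_rfl⟩) huS'
        _ = M * w := by ring
  exact fun u hu => key hu

set_option maxHeartbeats 1000000 in
/-- Let `f = f¹ + f²` with `f¹, f²` smooth time-dependent vector
fields on `ℝᴰ`, and let `φ`, `φ¹`, `φ²` be the exact flows of `y' = f(t,y)`,
`y' = f¹(t,y)`, `y' = f²(t,y)` respectively (starting at time `τ`, run for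
time `h`). Then the splitting scheme `Φˢ_{τ,h,f} = φ²_{τ,h} ∘ φ¹_{τ,h}` is a
first-order integrator: on any compact `U` and compact starting-time interval
`[a,b]` there is a constant `C` with
`‖Φˢ_{τ,h,f} − φ_{τ,h,f}‖_U ≤ C h²` for all sufficiently small `h > 0`. -/
theorem stmt8 {D : ℕ}
    (f f₁ f₂ : ℝ → (Fin D → ℝ) → (Fin D → ℝ))
    (hsum : ∀ t y, f t y = f₁ t y + f₂ t y)
    (hf₁ : ContDiff ℝ (⊤ : ℕ∞) (fun p : ℝ × (Fin D → ℝ) => f₁ p.1 p.2))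
    (hf₂ : ContDiff ℝ (⊤ : ℕ∞) (fun p : ℝ × (Fin D → ℝ) => f₂ p.1 p.2))
    (φ φ₁ φ₂ : ℝ → ℝ → (Fin D → ℝ) → (Fin D → ℝ))
    (hφ0 : ∀ τ x, φ τ 0 x = x)
    (hφ : ∀ τ x u, HasDerivAt (fun h => φ τ h x) (f (τ + u) (φ τ u x)) u)
    (hφ₁0 : ∀ τ x, φ₁ τ 0 x = x)
    (hφ₁ : ∀ τ x u, HasDerivAt (fun h => φ₁ τ h x) (f₁ (τ + u) (φ₁ τ u x)) u)
    (hφ₂0 : ∀ τ x, φ₂ τ 0 x = x)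
    (hφ₂ : ∀ τ x u, HasDerivAt (fun h => φ₂ τ h x) (f₂ (τ + u) (φ₂ τ u x)) u)
    (U : Set (Fin D → ℝ)) (hU : IsCompact U)
    (a b : ℝ) (ha : 0 ≤ a) :
    ∃ C : ℝ, ∃ h₀ > 0, ∀ τ ∈ Icc a b, ∀ h ∈ Ioc (0:ℝ) h₀, ∀ x ∈ U,
      ‖φ₂ τ h (φ₁ τ h x) - φ τ h x‖ ≤ C * h ^ 2 := by
  obtain ⟨R₀, hR₀⟩ := hU.isBounded.subset_closedBall 0
  set R : ℝ := max R₀ 0 with hRdef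
  have hUR : ∀ x ∈ U, ‖x‖ ≤ R := by
    intro x hx
    have := hR₀ hx
    rw [Metric.mem_closedBall, dist_zero_right] at this
    exact le_trans this (le_max_left _ _)
  set K : Set (ℝ × (Fin D → ℝ)) :=
    Icc a (max a b + 1) ×ˢ Metric.closedBall (0 : Fin D → ℝ) (R + 2) with hKdef
  have hKcomp : IsCompact K := isCompact_Icc.prod (isCompact_closedBall _ _)
  have hKconv : Convex ℝ K := (convex_Icc _ _).prod (convex_closedBall _ _)
  -- bounds on f₁, f₂ over K
  obtain ⟨M₁, hM₁⟩ := hKcomp.exists_bound_of_continuousOn hf₁.continuous.continuousOn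
  obtain ⟨M₂, hM₂⟩ := hKcomp.exists_bound_of_continuousOn hf₂.continuous.continuousOn
  set M : ℝ := max 1 (max M₁ M₂) with hMdef
  have hM1 : (1:ℝ) ≤ M := le_max_left _ _
  have hM0 : (0:ℝ) ≤ M := by linarith
  have hMf₁ : ∀ p ∈ K, ‖f₁ p.1 p.2‖ ≤ M := fun p hp =>
    le_trans (hM₁ p hp) (le_trans (le_max_left _ _) (le_max_right _ _))
  have hMf₂ : ∀ p ∈ K, ‖f₂ p.1 p.2‖ ≤ M := fun p hp =>
    le_trans (hM₂ p hp) (le_trans (le_max_right _ _) (le_max_right _ _))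
  -- Lipschitz constants on K
  obtain ⟨B₁, hB₁⟩ := hKcomp.exists_bound_of_continuousOn
    ((hf₁.continuous_fderiv (by simp)).continuousOn)
  obtain ⟨B₂, hB₂⟩ := hKcomp.exists_bound_of_continuousOn
    ((hf₂.continuous_fderiv (by simp)).continuousOn)
  have hlip₁ : LipschitzOnWith B₁.toNNReal (fun p : ℝ × (Fin D → ℝ) => f₁ p.1 p.2) K := by
    apply hKconv.lipschitzOnWith_of_nnnorm_hasFDerivWithin_le
      (f' := fderiv ℝ (fun p : ℝ × (Fin D → ℝ) => f₁ p.1 p.2))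
      (fun p _ => ((hf₁.differentiable (by simp)) p).hasFDerivAt.hasFDerivWithinAt)
    intro p hp
    rw [← NNReal.coe_le_coe, coe_nnnorm, Real.coe_toNNReal']
    exact le_trans (hB₁ p hp) (le_max_left _ _)
  have hlip₂ : LipschitzOnWith B₂.toNNReal (fun p : ℝ × (Fin D → ℝ) => f₂ p.1 p.2) K := by
    apply hKconv.lipschitzOnWith_of_nnnorm_hasFDerivWithin_le
      (f' := fderiv ℝ (fun p : ℝ × (Fin D → ℝ) => f₂ p.1 p.2))
      (fun p _ => ((hf₂.differentiable (by simp)) p).hasFDerivAt.hasFDerivWithinAt)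
    intro p hp
    rw [← NNReal.coe_le_coe, coe_nnnorm, Real.coe_toNNReal']
    exact le_trans (hB₂ p hp) (le_max_left _ _)
  set L : ℝ := max (B₁.toNNReal : ℝ) (B₂.toNNReal : ℝ) with hLdef
  have hL0 : (0:ℝ) ≤ L := le_trans (B₁.toNNReal).2 (le_max_left _ _)
  refine ⟨7 * L * M, 1 / (2 * M), by positivity, ?_⟩
  intro τ hτ h hh x hx
  have hh0 : 0 < h := hh.1
  have hMh : M * h ≤ 1 / 2 := by
    have h1 : M * h ≤ M * (1 / (2 * M)) := mul_le_mul_of_nonneg_left hh.2 hM0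
    have h2 : M * (1 / (2 * M)) = 1 / 2 := by
      field_simp
    linarith
  have hh1 : h ≤ 1 := by nlinarith
  have hxR : ‖x‖ ≤ R := hUR x hx
  have htK : ∀ u ∈ Icc (0:ℝ) h, τ + u ∈ Icc a (max a b + 1) := by
    intro u hu
    constructor
    · linarith [hτ.1, hu.1]
    · have : τ ≤ max a b := le_trans hτ.2 (le_max_right _ _)
      linarith [hu.2]
  -- the three trajectory bounds
  have hy1 : ∀ u ∈ Icc (0:ℝ) h, ‖φ₁ τ u x - x‖ ≤ M * u := by
    have := stmt8_stay (fun u => φ₁ τ u x) (fun u => f₁ (τ + u) (φ₁ τ u x))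
      (hφ₁ τ x) hM0 hh0.le (show M * h < 2 by linarith) ?_
    · intro u hu; have := this u hu; simp only [hφ₁0] at this; exact this
    · intro u hu hnear
      simp only [hφ₁0] at hnear
      refine hMf₁ (τ + u, φ₁ τ u x) ⟨htK u hu, ?_⟩
      rw [Metric.mem_closedBall, dist_zero_right]
      calc ‖φ₁ τ u x‖ ≤ ‖φ₁ τ u x - x‖ + ‖x‖ := stmt8_norm_le_sub_add _ _
        _ ≤ 2 + R := add_le_add hnear hxR
        _ = R + 2 := by ring
  have hg : ∀ u ∈ Icc (0:ℝ) h, ‖φ τ u x - x‖ ≤ 2 * M * u := by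
    have := stmt8_stay (fun u => φ τ u x) (fun u => f (τ + u) (φ τ u x))
      (hφ τ x) (by linarith) hh0.le (show 2 * M * h < 2 by nlinarith) ?_
    · intro u hu; have := this u hu; simp only [hφ0] at this; exact this
    · intro u hu hnear
      simp only [hφ0] at hnear
      have hmem : (τ + u, φ τ u x) ∈ K := by
        refine ⟨htK u hu, ?_⟩
        rw [Metric.mem_closedBall, dist_zero_right]
        calc ‖φ τ u x‖ ≤ ‖φ τ u x - x‖ + ‖x‖ := stmt8_norm_le_sub_add _ _
          _ ≤ 2 + R := add_le_add hnear hxR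
          _ = R + 2 := by ring
      show ‖f (τ + u) (φ τ u x)‖ ≤ 2 * M
      rw [hsum]
      calc ‖f₁ (τ + u) (φ τ u x) + f₂ (τ + u) (φ τ u x)‖
          ≤ ‖f₁ (τ + u) (φ τ u x)‖ + ‖f₂ (τ + u) (φ τ u x)‖ := norm_add_le _ _
        _ ≤ M + M := add_le_add (hMf₁ _ hmem) (hMf₂ _ hmem)
        _ = 2 * M := by ring
  have hx1R : ‖φ₁ τ h x‖ ≤ R + 1 := by
    have := hy1 h ⟨hh0.le, le_rfl⟩
    calc ‖φ₁ τ h x‖ ≤ ‖φ₁ τ h x - x‖ + ‖x‖ := stmt8_norm_le_sub_add _ _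
      _ ≤ M * h + R := add_le_add this hxR
      _ ≤ R + 1 := by linarith
  have hz : ∀ u ∈ Icc (0:ℝ) h, ‖φ₂ τ u (φ₁ τ h x) - φ₁ τ h x‖ ≤ M * u := by
    have := stmt8_stay (fun u => φ₂ τ u (φ₁ τ h x))
      (fun u => f₂ (τ + u) (φ₂ τ u (φ₁ τ h x)))
      (hφ₂ τ (φ₁ τ h x)) hM0 hh0.le (show M * h < 1 by linarith) ?_
    · intro u hu; have := this u hu; simp only [hφ₂0] at this; exact this
    · intro u hu hnear
      simp only [hφ₂0] at hnear
      refine hMf₂ (τ + u, φ₂ τ u (φ₁ τ h x)) ⟨htK u hu, ?_⟩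
      rw [Metric.mem_closedBall, dist_zero_right]
      calc ‖φ₂ τ u (φ₁ τ h x)‖
          ≤ ‖φ₂ τ u (φ₁ τ h x) - φ₁ τ h x‖ + ‖φ₁ τ h x‖ := stmt8_norm_le_sub_add _ _
        _ ≤ 1 + (R + 1) := add_le_add hnear hx1R
        _ = R + 2 := by ring
  -- membership of trajectories in K
  have hgK : ∀ u ∈ Icc (0:ℝ) h, (τ + u, φ τ u x) ∈ K := by
    intro u hu
    refine ⟨htK u hu, ?_⟩
    rw [Metric.mem_closedBall, dist_zero_right]
    have h1 := hg u hu
    have : 2 * M * u ≤ 2 * M * h := by nlinarith [hu.1, hu.2]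
    calc ‖φ τ u x‖ ≤ ‖φ τ u x - x‖ + ‖x‖ := stmt8_norm_le_sub_add _ _
      _ ≤ 2 * M * u + R := add_le_add h1 hxR
      _ ≤ R + 2 := by nlinarith
  have hy1K : ∀ u ∈ Icc (0:ℝ) h, (τ + u, φ₁ τ u x) ∈ K := by
    intro u hu
    refine ⟨htK u hu, ?_⟩
    rw [Metric.mem_closedBall, dist_zero_right]
    have h1 := hy1 u hu
    have : M * u ≤ M * h := by nlinarith [hu.1, hu.2]
    calc ‖φ₁ τ u x‖ ≤ ‖φ₁ τ u x - x‖ + ‖x‖ := stmt8_norm_le_sub_add _ _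
      _ ≤ M * u + R := add_le_add h1 hxR
      _ ≤ R + 2 := by nlinarith
  have hzK : ∀ u ∈ Icc (0:ℝ) h, (τ + u, φ₂ τ u (φ₁ τ h x)) ∈ K := by
    intro u hu
    refine ⟨htK u hu, ?_⟩
    rw [Metric.mem_closedBall, dist_zero_right]
    have h1 := hz u hu
    have : M * u ≤ M * h := by nlinarith [hu.1, hu.2]
    calc ‖φ₂ τ u (φ₁ τ h x)‖
        ≤ ‖φ₂ τ u (φ₁ τ h x) - φ₁ τ h x‖ + ‖φ₁ τ h x‖ := stmt8_norm_le_sub_add _ _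
      _ ≤ M * u + (R + 1) := add_le_add h1 hx1R
      _ ≤ R + 2 := by nlinarith
  -- continuity of integrands
  have hcφ : Continuous (fun u => φ τ u x) :=
    continuous_iff_continuousAt.2 fun u => (hφ τ x u).continuousAt
  have hcφ₁ : Continuous (fun u => φ₁ τ u x) :=
    continuous_iff_continuousAt.2 fun u => (hφ₁ τ x u).continuousAt
  have hcφ₂ : Continuous (fun u => φ₂ τ u (φ₁ τ h x)) :=
    continuous_iff_continuousAt.2 fun u => (hφ₂ τ (φ₁ τ h x) u).continuousAt
  have hfcont : Continuous (fun p : ℝ × (Fin D → ℝ) => f p.1 p.2) := by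
    have : (fun p : ℝ × (Fin D → ℝ) => f p.1 p.2)
        = fun p : ℝ × (Fin D → ℝ) => f₁ p.1 p.2 + f₂ p.1 p.2 := by
      funext p; exact hsum p.1 p.2
    rw [this]
    exact hf₁.continuous.add hf₂.continuous
  have hc0 : Continuous (fun u => f (τ + u) (φ τ u x)) :=
    hfcont.comp ((continuous_const.add continuous_id).prodMk hcφ)
  have hc1 : Continuous (fun u => f₁ (τ + u) (φ₁ τ u x)) :=
    hf₁.continuous.comp ((continuous_const.add continuous_id).prodMk hcφ₁)
  have hc2 : Continuous (fun u => f₂ (τ + u) (φ₂ τ u (φ₁ τ h x))) :=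
    hf₂.continuous.comp ((continuous_const.add continuous_id).prodMk hcφ₂)
  have hint0 := hc0.intervalIntegrable (μ := MeasureTheory.volume) (0:ℝ) h
  have hint1 := hc1.intervalIntegrable (μ := MeasureTheory.volume) (0:ℝ) h
  have hint2 := hc2.intervalIntegrable (μ := MeasureTheory.volume) (0:ℝ) h
  -- FTC
  have I0 : ∫ u in (0:ℝ)..h, f (τ + u) (φ τ u x) = φ τ h x - x := by
    have := intervalIntegral.integral_eq_sub_of_hasDerivAt (fun u _ => hφ τ x u) hint0
    simpa [hφ0] using this
  have I1 : ∫ u in (0:ℝ)..h, f₁ (τ + u) (φ₁ τ u x) = φ₁ τ h x - x := by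
    have := intervalIntegral.integral_eq_sub_of_hasDerivAt (fun u _ => hφ₁ τ x u) hint1
    simpa [hφ₁0] using this
  have I2 : ∫ u in (0:ℝ)..h, f₂ (τ + u) (φ₂ τ u (φ₁ τ h x))
      = φ₂ τ h (φ₁ τ h x) - φ₁ τ h x := by
    have := intervalIntegral.integral_eq_sub_of_hasDerivAt
      (fun u _ => hφ₂ τ (φ₁ τ h x) u) hint2
    simpa [hφ₂0] using this
  have key : φ₂ τ h (φ₁ τ h x) - φ τ h x
      = ∫ u in (0:ℝ)..h, (f₂ (τ + u) (φ₂ τ u (φ₁ τ h x)) + f₁ (τ + u) (φ₁ τ u x)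
          - f (τ + u) (φ τ u x)) := by
    rw [intervalIntegral.integral_sub (hint2.add hint1) hint0,
      intervalIntegral.integral_add hint2 hint1, I0, I1, I2]
    abel
  rw [key]
  have hbnd : ∀ u ∈ Set.uIoc (0:ℝ) h,
      ‖f₂ (τ + u) (φ₂ τ u (φ₁ τ h x)) + f₁ (τ + u) (φ₁ τ u x) - f (τ + u) (φ τ u x)‖
        ≤ 7 * L * M * h := by
    intro u huI
    rw [uIoc_of_le hh0.le] at huI
    have hu : u ∈ Icc (0:ℝ) h := ⟨huI.1.le, huI.2⟩
    have huh : u ≤ h := hu.2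
    have hu0 : 0 ≤ u := hu.1
    -- rewrite using hsum
    have hrw : f₂ (τ + u) (φ₂ τ u (φ₁ τ h x)) + f₁ (τ + u) (φ₁ τ u x) - f (τ + u) (φ τ u x)
        = (f₂ (τ + u) (φ₂ τ u (φ₁ τ h x)) - f₂ (τ + u) (φ τ u x))
          + (f₁ (τ + u) (φ₁ τ u x) - f₁ (τ + u) (φ τ u x)) := by
      rw [hsum]; abel
    rw [hrw]
    -- Lipschitz estimates
    have hd2 : ‖f₂ (τ + u) (φ₂ τ u (φ₁ τ h x)) - f₂ (τ + u) (φ τ u x)‖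
        ≤ L * ‖φ₂ τ u (φ₁ τ h x) - φ τ u x‖ := by
      have := hlip₂.dist_le_mul (τ + u, φ₂ τ u (φ₁ τ h x)) (hzK u hu)
        (τ + u, φ τ u x) (hgK u hu)
      rw [Prod.dist_eq, dist_self, dist_eq_norm, dist_eq_norm] at this
      simp only [max_eq_right dist_nonneg, dist_eq_norm] at this
      calc ‖f₂ (τ + u) (φ₂ τ u (φ₁ τ h x)) - f₂ (τ + u) (φ τ u x)‖
          ≤ (B₂.toNNReal : ℝ) * ‖φ₂ τ u (φ₁ τ h x) - φ τ u x‖ := by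
            simpa [dist_eq_norm] using this
        _ ≤ L * ‖φ₂ τ u (φ₁ τ h x) - φ τ u x‖ := by
            apply mul_le_mul_of_nonneg_right (le_max_right _ _) (norm_nonneg _)
    have hd1 : ‖f₁ (τ + u) (φ₁ τ u x) - f₁ (τ + u) (φ τ u x)‖
        ≤ L * ‖φ₁ τ u x - φ τ u x‖ := by
      have := hlip₁.dist_le_mul (τ + u, φ₁ τ u x) (hy1K u hu)
        (τ + u, φ τ u x) (hgK u hu)
      rw [Prod.dist_eq, dist_self, dist_eq_norm, dist_eq_norm] at this
      simp only [max_eq_right dist_nonneg, dist_eq_norm] at this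
      calc ‖f₁ (τ + u) (φ₁ τ u x) - f₁ (τ + u) (φ τ u x)‖
          ≤ (B₁.toNNReal : ℝ) * ‖φ₁ τ u x - φ τ u x‖ := by
            simpa [dist_eq_norm] using this
        _ ≤ L * ‖φ₁ τ u x - φ τ u x‖ := by
            apply mul_le_mul_of_nonneg_right (le_max_left _ _) (norm_nonneg _)
    -- distance estimates
    have e1 : ‖φ₂ τ u (φ₁ τ h x) - φ τ u x‖ ≤ 4 * M * h := by
      have h1 := hz u hu
      have h2 := hy1 h ⟨hh0.le, le_rfl⟩
      have h3 := hg u hu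
      calc ‖φ₂ τ u (φ₁ τ h x) - φ τ u x‖
          ≤ ‖φ₂ τ u (φ₁ τ h x) - φ₁ τ h x‖ + ‖φ₁ τ h x - φ τ u x‖ :=
            norm_sub_le_norm_sub_add_norm_sub (φ₂ τ u (φ₁ τ h x)) (φ₁ τ h x) (φ τ u x)
        _ ≤ M * u + (M * h + 2 * M * u) := by
            refine add_le_add h1
              (le_trans (norm_sub_le_norm_sub_add_norm_sub (φ₁ τ h x) x (φ τ u x)) ?_)
            rw [norm_sub_rev x]
            exact add_le_add h2 h3
        _ ≤ 4 * M * h := by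
            have hMu : M * u ≤ M * h := mul_le_mul_of_nonneg_left huh hM0
            linarith
    have e2 : ‖φ₁ τ u x - φ τ u x‖ ≤ 3 * M * h := by
      have h1 := hy1 u hu
      have h3 := hg u hu
      calc ‖φ₁ τ u x - φ τ u x‖
          ≤ ‖φ₁ τ u x - x‖ + ‖x - φ τ u x‖ :=
            norm_sub_le_norm_sub_add_norm_sub (φ₁ τ u x) x (φ τ u x)
        _ ≤ M * u + 2 * M * u := by rw [norm_sub_rev x]; exact add_le_add h1 h3
        _ ≤ 3 * M * h := by
            have hMu : M * u ≤ M * h := mul_le_mul_of_nonneg_left huh hM0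
            linarith
    calc ‖(f₂ (τ + u) (φ₂ τ u (φ₁ τ h x)) - f₂ (τ + u) (φ τ u x))
          + (f₁ (τ + u) (φ₁ τ u x) - f₁ (τ + u) (φ τ u x))‖
        ≤ ‖f₂ (τ + u) (φ₂ τ u (φ₁ τ h x)) - f₂ (τ + u) (φ τ u x)‖
          + ‖f₁ (τ + u) (φ₁ τ u x) - f₁ (τ + u) (φ τ u x)‖ := norm_add_le _ _
      _ ≤ L * (4 * M * h) + L * (3 * M * h) := by
          refine add_le_add (le_trans hd2 ?_) (le_trans hd1 ?_)
          · exact mul_le_mul_of_nonneg_left e1 hL0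
          · exact mul_le_mul_of_nonneg_left e2 hL0
      _ = 7 * L * M * h := by ring
  calc ‖∫ u in (0:ℝ)..h, (f₂ (τ + u) (φ₂ τ u (φ₁ τ h x)) + f₁ (τ + u) (φ₁ τ u x)
          - f (τ + u) (φ τ u x))‖
      ≤ 7 * L * M * h * |h - 0| := intervalIntegral.norm_integral_le_of_norm_le_const hbnd
    _ = 7 * L * M * h ^ 2 := by rw [sub_zero, abs_of_pos hh0]; ring
end

section
/- Let f : [0,∞) × ℝᴰ → ℝᴰ be smooth, U ⊆ ℝᴰ compact, and φ_{τ,T,f} the time-T flow starting at time τ. Suppose Ψ is a composition-closed class such that on every compact U' there is a constant C with: for every τ' ∈ [τ, τ+T] and every sufficiently small h > 0 there exists φ ∈ Ψ with ‖φ_{τ',h,f} − φ‖_{U'} ≤ C h². Then φ_{τ,T,f} lies in the sup-norm closure of Ψ on U. -/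
open Set Real Metric



private lemma gb_mono {δ η K : ℝ} (hδ : 0 ≤ δ) (hη : 0 ≤ η) (hK : 0 ≤ K) {x x' : ℝ}
    (hx : 0 ≤ x) (hxx : x ≤ x') :
    gronwallBound δ K η x ≤ gronwallBound δ K η x' := by
  rcases eq_or_ne K 0 with hK0 | hK0
  · rw [hK0, gronwallBound_K0]; beta_reduce; nlinarith
  · have hKpos : (0:ℝ) < K := lt_of_le_of_ne hK (Ne.symm hK0)
    rw [gronwallBound_of_K_ne_0 hK0]; beta_reduce
    have h1 : exp (K * x) ≤ exp (K * x') := exp_le_exp.2 (by nlinarith)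
    have h0 : (1:ℝ) ≤ exp (K * x) := by
      rw [← exp_zero]; exact exp_le_exp.2 (by nlinarith)
    have h2 : (0:ℝ) ≤ η / K := div_nonneg hη hKpos.le
    nlinarith

private lemma gb_nonneg {δ η K : ℝ} (hδ : 0 ≤ δ) (hη : 0 ≤ η) (hK : 0 ≤ K) {x : ℝ}
    (hx : 0 ≤ x) : 0 ≤ gronwallBound δ K η x := by
  have := gb_mono hδ hη hK (le_refl (0:ℝ)) hx
  rw [gronwallBound_x0] at this
  linarith

private lemma gb_le {η K : ℝ} (hη : 0 ≤ η) (hK : 0 ≤ K) {x : ℝ} (hx : 0 ≤ x) :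
    gronwallBound 0 K η x ≤ η * x * exp (K * x) := by
  rcases eq_or_ne K 0 with hK0 | hK0
  · rw [hK0, gronwallBound_K0]; beta_reduce
    rw [zero_mul, exp_zero]; nlinarith
  · have hKpos : (0:ℝ) < K := lt_of_le_of_ne hK (Ne.symm hK0)
    rw [gronwallBound_of_K_ne_0 hK0]; beta_reduce
    rw [zero_mul, zero_add, div_mul_eq_mul_div, div_le_iff₀ hKpos]
    have key : exp (K * x) - 1 ≤ K * x * exp (K * x) := by
      have h1 : 1 - (K*x) ≤ exp (-(K*x)) := by
        have := add_one_le_exp (-(K*x)); linarith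
      have h2 : exp (-(K*x)) * exp (K*x) = 1 := by
        rw [← exp_add]; simp
      have h3 : (0:ℝ) < exp (K*x) := exp_pos _
      nlinarith
    nlinarith

/-- Grönwall comparison with automatic "stay in the set" via a stopping-time argument.
`y` is a reference curve (approximate solution with error `η`) whose closed `r`-tube lies
in `s`; `w` is an exact solution. -/
private lemma gron_aux {E : Type*} [NormedAddCommGroup E] [NormedSpace ℝ E]
    {v : ℝ → E → E} {s : Set E} {K : NNReal} {y w : ℝ → E} {y' : ℝ → E}
    {a b δ η r : ℝ}
    (hab : a ≤ b)
    (hv : ∀ t, LipschitzOnWith K (v t) s)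
    (hyc : ContinuousOn y (Icc a b))
    (hy : ∀ t ∈ Ico a b, HasDerivAt y (y' t) t)
    (hyv : ∀ t ∈ Ico a b, dist (y' t) (v t (y t)) ≤ η)
    (hwc : ContinuousOn w (Icc a b))
    (hw : ∀ t ∈ Ico a b, HasDerivAt w (v t (w t)) t)
    (htube : ∀ t ∈ Icc a b, ∀ p, dist p (y t) ≤ r → p ∈ s)
    (hδ : dist (w a) (y a) ≤ δ) (hδ0 : 0 ≤ δ) (hη : 0 ≤ η)
    (hr : gronwallBound δ K η (b - a) < r) :
    ∀ t ∈ Icc a b, dist (w t) (y t) ≤ gronwallBound δ K η (t - a) := by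
  have hKnn : (0:ℝ) ≤ K := K.coe_nonneg
  have hrpos : 0 < r := lt_of_le_of_lt (gb_nonneg hδ0 hη hKnn (by linarith)) hr
  -- a generic application of Mathlib's Grönwall lemma on a subinterval [a, c]
  have main : ∀ c ∈ Icc a b, (∀ t ∈ Ico a c, dist (w t) (y t) ≤ r) →
      ∀ t ∈ Icc a c, dist (w t) (y t) ≤ gronwallBound δ K η (t - a) := by
    intro c hc hmem t ht
    have hsub : Icc a c ⊆ Icc a b := Icc_subset_Icc le_rfl hc.2
    have hsub' : Ico a c ⊆ Ico a b := Ico_subset_Ico le_rfl hc.2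
    have := dist_le_of_approx_trajectories_ODE_of_mem
      (v := v) (s := fun _ => s) (K := K) (f := w) (f' := fun t => v t (w t))
      (g := y) (g' := y') (εf := 0) (εg := η) (a := a) (b := c) (δ := δ)
      (fun t _ => hv t)
      (hwc.mono hsub)
      (fun t ht' => ((hw t (hsub' ht')).hasDerivWithinAt))
      (fun t _ => by simp)
      (fun t ht' => htube t (hsub (mem_Icc_of_Ico ht')) _ (hmem t ht'))
      (hyc.mono hsub)
      (fun t ht' => ((hy t (hsub' ht')).hasDerivWithinAt))
      (fun t ht' => hyv t (hsub' ht'))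
      (fun t ht' => htube t (hsub (mem_Icc_of_Ico ht')) _ (by simp [dist_self, hrpos.le]))
      hδ t ht
    rwa [zero_add] at this
  -- stopping time argument
  set A : Set ℝ := {t ∈ Icc a b | r ≤ dist (w t) (y t)} with hA
  rcases eq_empty_or_nonempty A with hAe | hAne
  · -- never reaches distance r
    have hmem : ∀ t ∈ Ico a b, dist (w t) (y t) ≤ r := by
      intro t ht
      by_contra hcon
      exact (eq_empty_iff_forall_notMem.1 hAe t) ⟨mem_Icc_of_Ico ht, le_of_not_ge hcon⟩
    exact main b ⟨hab, le_rfl⟩ hmem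
  · exfalso
    have hdc : ContinuousOn (fun t => dist (w t) (y t)) (Icc a b) :=
      continuous_dist.comp_continuousOn (hwc.prodMk hyc)
    have hAclosed : IsClosed A := by
      have : A = Icc a b ∩ (fun t => dist (w t) (y t)) ⁻¹' Ici r := by
        ext t
        constructor
        · rintro ⟨h1, h2⟩; exact ⟨h1, h2⟩
        · rintro ⟨h1, h2⟩; exact ⟨h1, h2⟩
      rw [this]
      exact (hdc.preimage_isClosed_of_isClosed isClosed_Icc isClosed_Ici)
    have hAbdd : BddBelow A := ⟨a, fun t ht => ht.1.1⟩
    set c := sInf A with hc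
    have hcA : c ∈ A := hAclosed.csInf_mem hAne hAbdd
    have hcI : c ∈ Icc a b := hcA.1
    have hac : a < c := by
      rcases lt_or_eq_of_le hcI.1 with h | h
      · exact h
      · exfalso
        have : dist (w a) (y a) ≤ δ := hδ
        have hδr : δ < r := by
          have : δ = gronwallBound δ K η 0 := (gronwallBound_x0 _ _ _).symm
          calc δ = gronwallBound δ K η 0 := this
            _ ≤ gronwallBound δ K η (b - a) := gb_mono hδ0 hη hKnn le_rfl (by linarith)
            _ < r := hr
        rw [← h] at hcA
        linarith [hcA.2]
    have hmem : ∀ t ∈ Ico a c, dist (w t) (y t) ≤ r := by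
      intro t ht
      by_contra hcon
      have htA : t ∈ A := ⟨⟨ht.1, le_trans ht.2.le hcI.2⟩, (le_of_not_ge hcon)⟩
      exact absurd (csInf_le hAbdd htA) (not_le.2 ht.2)
    have := main c hcI hmem c ⟨hac.le, le_rfl⟩
    have hlt : gronwallBound δ K η (c - a) < r :=
      lt_of_le_of_lt (gb_mono hδ0 hη hKnn (by linarith) (by linarith [hcI.2])) hr
    linarith [hcA.2]
private lemma lip_aux {E : Type*} [NormedAddCommGroup E] [NormedSpace ℝ E] [ProperSpace E]
    {F : ℝ × E → E} (hF : ContDiff ℝ (⊤ : ℕ∞) F) (a b R : ℝ) :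
    ∃ K : NNReal, ∀ σ ∈ Icc a b, LipschitzOnWith K (fun x => F (σ, x)) (closedBall (0:E) R) := by
  set S : Set (ℝ × E) := Icc a b ×ˢ closedBall (0:E) R with hS
  have hScomp : IsCompact S := isCompact_Icc.prod (isCompact_closedBall _ _)
  have hconv : Convex ℝ S := (convex_Icc a b).prod (convex_closedBall _ _)
  have hfd : Continuous fun p => fderiv ℝ F p := hF.continuous_fderiv (by simp)
  obtain ⟨C, hC⟩ := hScomp.exists_bound_of_continuousOn (hfd.continuousOn (s := S))
  refine ⟨C.toNNReal, ?_⟩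
  have hlip : LipschitzOnWith C.toNNReal F S := by
    apply Convex.lipschitzOnWith_of_nnnorm_fderiv_le (𝕜 := ℝ)
      (fun p _ => (hF.differentiable (by simp)).differentiableAt) ?_ hconv
    intro p hp
    have := hC p hp
    rw [← NNReal.coe_le_coe, coe_nnnorm, Real.coe_toNNReal']
    exact this.trans (le_max_left _ _)
  intro σ hσ
  intro x hx y hy
  have := hlip (x := (σ, x)) ⟨hσ, hx⟩ (y := (σ, y)) ⟨hσ, hy⟩
  simpa [Prod.edist_eq, edist_self] using this

set_option maxHeartbeats 4000000 in
/-- Let `f` be a smooth time-dependent vector field with flow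
`φ τ' h x = y(τ'+h)` where `y' = f(t,y)`, `y(τ') = x`, and let `Ψ` be a
composition-closed class of maps such that on every compact `U'` there is a
constant `C` with: for every `τ' ∈ [τ, τ+T]` and every sufficiently small
`h > 0` there is `g ∈ Ψ` with `‖φ_{τ',h,f} − g‖_{U'} ≤ C h²`. Then the
time-`T` flow `φ_{τ,T,f}` lies in the sup-norm closure of `Ψ` on any
compact `U`. -/
theorem stmt16 {D : ℕ}
    (f : ℝ → (Fin D → ℝ) → (Fin D → ℝ))
    (hf : ContDiff ℝ (⊤ : ℕ∞) (fun p : ℝ × (Fin D → ℝ) => f p.1 p.2))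
    (φ : ℝ → ℝ → (Fin D → ℝ) → (Fin D → ℝ))
    (hφ0 : ∀ τ' x, φ τ' 0 x = x)
    (hφ : ∀ τ' x u, HasDerivAt (fun h => φ τ' h x) (f (τ' + u) (φ τ' u x)) u)
    (τ T : ℝ) (hτ : 0 ≤ τ) (hT : 0 ≤ T)
    (Ψ : Set ((Fin D → ℝ) → (Fin D → ℝ)))
    (hcomp : ∀ g₁ ∈ Ψ, ∀ g₂ ∈ Ψ, g₂ ∘ g₁ ∈ Ψ)
    (happrox : ∀ U' : Set (Fin D → ℝ), IsCompact U' →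
      ∃ C : ℝ, ∃ h₀ > 0, ∀ τ' ∈ Icc τ (τ + T), ∀ h ∈ Ioc (0:ℝ) h₀,
        ∃ g ∈ Ψ, ∀ x ∈ U', ‖φ τ' h x - g x‖ ≤ C * h ^ 2)
    (U : Set (Fin D → ℝ)) (hU : IsCompact U) :
    ∀ ε > 0, ∃ g ∈ Ψ, ∀ x ∈ U, ‖φ τ T x - g x‖ ≤ ε := by
  intro ε hε
  have hcontφ : ∀ τ' x, Continuous (fun u => φ τ' u x) := fun τ' x =>
    continuous_iff_continuousAt.2 fun u => (hφ τ' x u).continuousAt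
  have hclamp : ∀ (t c : ℝ), 0 ≤ t → t ≤ c → max 0 (min t c) = t := fun t c h1 h2 => by
    rw [min_eq_left h2, max_eq_right h1]
  have hclamp_mem : ∀ (t c : ℝ), 0 ≤ c → max 0 (min t c) ∈ Icc 0 c := fun t c hc =>
    ⟨le_max_left _ _, max_le hc (min_le_right _ _)⟩
  -- Uniform bound on the exact flow over U and [0, T]
  have hUB : ∃ R : ℝ, 0 ≤ R ∧ ∀ x ∈ U, ∀ u ∈ Icc (0:ℝ) T, ‖φ τ u x‖ ≤ R := by
    have hpt : ∀ x₀ ∈ U, ∃ ρ > 0, ∃ Rb : ℝ,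
        ∀ x, dist x x₀ ≤ ρ → ∀ u ∈ Icc (0:ℝ) T, ‖φ τ u x‖ ≤ Rb := by
      intro x₀ _
      obtain ⟨M₀, hM₀⟩ := isCompact_Icc.exists_bound_of_continuousOn
        ((hcontφ τ x₀).continuousOn (s := Icc (0:ℝ) T))
      obtain ⟨L₀, hL₀⟩ := lip_aux hf τ (τ + T) (M₀ + 2)
      set ρ : ℝ := exp (-((L₀:ℝ) * T)) / 2 with hρdef
      have hρpos : 0 < ρ := by positivity
      refine ⟨ρ, hρpos, M₀ + 1, fun x hxρ u hu => ?_⟩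
      set v : ℝ → (Fin D → ℝ) → (Fin D → ℝ) := fun t => f (τ + max 0 (min t T)) with hvdef
      have hgron := gron_aux (v := v) (s := closedBall (0:(Fin D → ℝ)) (M₀ + 2)) (K := L₀)
        (y := fun u => φ τ u x₀) (y' := fun t => f (τ + t) (φ τ t x₀))
        (w := fun u => φ τ u x) (a := 0) (b := T) (δ := ρ) (η := 0) (r := 1)
        hT
        (fun t => by
          refine hL₀ _ ⟨le_add_of_nonneg_right (hclamp_mem t T hT).1, ?_⟩
          have := (hclamp_mem t T hT).2; linarith)
        ((hcontφ τ x₀).continuousOn)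
        (fun t _ => hφ τ x₀ t)
        (fun t ht => by
          simp only [hvdef, hclamp t T ht.1 ht.2.le, dist_self, le_refl])
        ((hcontφ τ x).continuousOn)
        (fun t ht => by
          have := hφ τ x t
          simpa only [hvdef, hclamp t T ht.1 ht.2.le] using this)
        (fun t ht p hp => by
          have h1 : ‖φ τ t x₀‖ ≤ M₀ := hM₀ _ ht
          have hp' : dist p (φ τ t x₀) ≤ 1 := hp
          have h2 := dist_triangle p (φ τ t x₀) 0
          simp only [dist_zero_right] at h2
          rw [mem_closedBall, dist_zero_right]
          linarith)
        (by simp only [hφ0]; exact hxρ)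
        hρpos.le le_rfl
        (by
          rw [sub_zero, gronwallBound_ε0, hρdef, div_mul_eq_mul_div, ← exp_add]
          norm_num)
      have := hgron u hu
      have hmono : gronwallBound ρ (L₀:ℝ) 0 (u - 0) ≤ gronwallBound ρ (L₀:ℝ) 0 T :=
        gb_mono hρpos.le le_rfl L₀.coe_nonneg (by linarith [hu.1]) (by linarith [hu.2])
      have hval : gronwallBound ρ (L₀:ℝ) 0 T = 1/2 := by
        rw [gronwallBound_ε0, hρdef, div_mul_eq_mul_div, ← exp_add]
        norm_num
      have h1 : ‖φ τ u x₀‖ ≤ M₀ := hM₀ _ hu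
      have h2 := dist_triangle (φ τ u x) (φ τ u x₀) 0
      simp only [dist_zero_right] at h2
      have : dist (φ τ u x) (φ τ u x₀) ≤ 1/2 := by
        calc dist (φ τ u x) (φ τ u x₀) ≤ gronwallBound ρ (L₀:ℝ) 0 (u - 0) := this
          _ ≤ 1/2 := hval ▸ hmono
      linarith
    choose! ρ hρpos Rb hRb using hpt
    obtain ⟨t, htU, hcover⟩ := hU.elim_nhds_subcover (fun x₀ => ball x₀ (ρ x₀))
      (fun x hx => ball_mem_nhds x (hρpos x hx))
    obtain ⟨R0, hR0⟩ := (t.image Rb).exists_le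
    refine ⟨max R0 0, le_max_right _ _, fun x hx u hu => ?_⟩
    obtain ⟨x₀, hx₀t, hxball⟩ := mem_iUnion₂.1 (hcover hx)
    have hx₀U : x₀ ∈ U := htU _ hx₀t
    have := hRb x₀ hx₀U x (le_of_lt (mem_ball.1 hxball)) u hu
    have hRble : Rb x₀ ≤ R0 := hR0 _ (Finset.mem_image_of_mem Rb hx₀t)
    calc ‖φ τ u x‖ ≤ Rb x₀ := this
      _ ≤ R0 := hRble
      _ ≤ max R0 0 := le_max_left _ _
  obtain ⟨R, hR0, hRB⟩ := hUB
  have hUs : ∀ x ∈ U, x ∈ closedBall (0:(Fin D → ℝ)) (R + 2) := by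
    intro x hx
    have := hRB x hx 0 ⟨le_rfl, hT⟩
    rw [hφ0] at this
    rw [mem_closedBall, dist_zero_right]
    linarith
  rcases hT.eq_or_lt with hT0 | hTpos
  · -- case T = 0
    subst hT0
    obtain ⟨L, hL⟩ := lip_aux hf τ (τ + 1) (R + 2)
    obtain ⟨M, hM⟩ := (isCompact_Icc.prod (isCompact_closedBall (0:(Fin D → ℝ)) (R+2))
      : IsCompact (Icc τ (τ+1) ×ˢ closedBall (0:(Fin D → ℝ)) (R+2))).exists_bound_of_continuousOn
      (hf.continuous.continuousOn)
    set M' := max M 0 with hM'def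
    have hM'0 : 0 ≤ M' := le_max_right _ _
    obtain ⟨C, h₀, hh₀, happ⟩ := happrox (closedBall (0:(Fin D → ℝ)) (R+2))
      (isCompact_closedBall _ _)
    set C' := max C 0 with hC'def
    have hC'0 : 0 ≤ C' := le_max_right _ _
    set K1 := M' * exp (L:ℝ) + C' + 1 with hK1def
    have hK1pos : 0 < K1 := by positivity
    set h : ℝ := min h₀ (min 1 (min ε 1 / (2 * K1))) with hhdef
    have hεm : 0 < min ε 1 := lt_min hε one_pos
    have hhpos : 0 < h := by
      refine lt_min hh₀ (lt_min one_pos ?_); positivity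
    have hh1 : h ≤ 1 := (min_le_right _ _).trans (min_le_left _ _)
    have hhK : h ≤ min ε 1 / (2 * K1) := (min_le_right _ _).trans (min_le_right _ _)
    obtain ⟨g, hgΨ, hgB⟩ := happ τ ⟨le_rfl, by linarith⟩ h ⟨hhpos, min_le_left _ _⟩
    clear_value M' C' K1 h
    have h4 : h * K1 ≤ min ε 1 / 2 := by
      rw [le_div_iff₀ (by linarith : (0:ℝ) < 2*K1)] at hhK
      linarith
    have hexpLh : exp ((L:ℝ) * h) ≤ exp (L:ℝ) := by
      apply exp_le_exp.2; nlinarith [L.coe_nonneg]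
    have hb1 : gronwallBound 0 (L:ℝ) M' (h - 0) ≤ min ε 1 / 2 := by
      have h1 : gronwallBound 0 (L:ℝ) M' (h - 0) ≤ M' * h * exp ((L:ℝ) * h) := by
        rw [sub_zero]; exact gb_le hM'0 L.coe_nonneg hhpos.le
      have e1 : M' * h * exp ((L:ℝ) * h) ≤ M' * h * exp (L:ℝ) :=
        mul_le_mul_of_nonneg_left hexpLh (by positivity)
      have e2 : M' * h * exp (L:ℝ) ≤ h * K1 := by
        rw [hK1def]; nlinarith [hhpos.le, hC'0]
      linarith
    have hCh : C * h^2 ≤ min ε 1 / 2 := by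
      have e1 : C * h^2 ≤ C' * h^2 := mul_le_mul_of_nonneg_right (by rw [hC'def]; exact le_max_left _ _) (sq_nonneg h)
      have e2 : C' * h^2 ≤ C' * h := by nlinarith [mul_nonneg (mul_nonneg hC'0 hhpos.le) (sub_nonneg.2 hh1)]
      have e3 : C' * h ≤ h * K1 := by
        rw [hK1def]; nlinarith [mul_nonneg hM'0 (exp_pos (L:ℝ)).le, hhpos.le]
      linarith
    have hmin1 : min ε 1 ≤ 1 := min_le_right _ _
    refine ⟨g, hgΨ, fun x hx => ?_⟩
    have hxs := hUs x hx
    have hxn : ‖x‖ ≤ R := by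
      have := hRB x hx 0 ⟨le_rfl, le_rfl⟩; rwa [hφ0] at this
    set v : ℝ → (Fin D → ℝ) → (Fin D → ℝ) := fun t => f (τ + max 0 (min t h)) with hvdef
    have hgron := gron_aux (v := v) (s := closedBall (0:(Fin D → ℝ)) (R + 2)) (K := L)
      (y := fun _ => x) (y' := fun _ => 0)
      (w := fun u => φ τ u x) (a := 0) (b := h) (δ := 0) (η := M') (r := 1)
      hhpos.le
      (fun t => by
        refine hL _ ⟨le_add_of_nonneg_right (hclamp_mem t h hhpos.le).1, ?_⟩
        have := (hclamp_mem t h hhpos.le).2; linarith)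
      continuousOn_const
      (fun t _ => hasDerivAt_const t x)
      (fun t ht => by
        have hmem : (τ + t, x) ∈ Icc τ (τ+1) ×ˢ closedBall (0:(Fin D → ℝ)) (R+2) := by
          refine ⟨⟨?_, ?_⟩, hxs⟩
          · show τ ≤ τ + t; linarith [ht.1]
          · show τ + t ≤ τ + 1; have : t < h := ht.2; linarith
        have hMt : ‖f (τ + t) x‖ ≤ M := hM _ hmem
        simp only [hvdef, hclamp t h ht.1 ht.2.le, dist_zero_left]
        exact le_trans hMt (by rw [hM'def]; exact le_max_left _ _))
      ((hcontφ τ x).continuousOn)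
      (fun t ht => by
        have := hφ τ x t
        simpa only [hvdef, hclamp t h ht.1 ht.2.le] using this)
      (fun t _ p hp => by
        have hp' : dist p x ≤ 1 := hp
        have h2 := dist_triangle p x 0
        simp only [dist_zero_right] at h2
        rw [mem_closedBall, dist_zero_right]
        linarith)
      (by simp only [hφ0, dist_self]; exact le_rfl)
      le_rfl hM'0
      (by linarith)
    have hend := hgron h ⟨hhpos.le, le_rfl⟩
    calc ‖φ τ 0 x - g x‖ = ‖x - g x‖ := by rw [hφ0]
      _ ≤ ‖x - φ τ h x‖ + ‖φ τ h x - g x‖ := norm_sub_le_norm_sub_add_norm_sub _ _ _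
      _ ≤ min ε 1 / 2 + min ε 1 / 2 := by
          refine add_le_add ?_ ((hgB x hxs).trans hCh)
          rw [← dist_eq_norm, dist_comm]
          exact hend.trans hb1
      _ ≤ ε := by have := min_le_left ε 1; linarith
  · -- case 0 < T
    obtain ⟨L, hL⟩ := lip_aux hf τ (τ + T) (R + 2)
    obtain ⟨C, h₀, hh₀, happ⟩ := happrox (closedBall (0:(Fin D → ℝ)) (R+2))
      (isCompact_closedBall _ _)
    obtain ⟨C', hC'def⟩ : ∃ C', C' = max C 0 := ⟨_, rfl⟩
    have hC'0 : 0 ≤ C' := by rw [hC'def]; exact le_max_right _ _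
    obtain ⟨m, hmdef⟩ : ∃ m : ℝ, m = min ε (exp (-(L:ℝ)) / 2) := ⟨_, rfl⟩
    have hm : 0 < m := by rw [hmdef]; exact lt_min hε (by positivity)
    obtain ⟨n₀, hn₀⟩ := exists_nat_ge (max (T / min h₀ 1) (C' * T^2 * exp ((L:ℝ)*T) / m))
    obtain ⟨N, hNdef⟩ : ∃ N : ℕ, N = n₀ + 1 := ⟨_, rfl⟩
    have hNR : (max (T / min h₀ 1) (C' * T^2 * exp ((L:ℝ)*T) / m)) ≤ (N:ℝ) := by
      rw [hNdef]; push_cast; linarith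
    have hN1 : (1:ℝ) ≤ (N:ℝ) := by rw [hNdef]; push_cast; linarith
    have hNge : 1 ≤ N := by rw [hNdef]; omega
    have hNpos : (0:ℝ) < N := by linarith
    have hNne : (N:ℝ) ≠ 0 := ne_of_gt hNpos
    obtain ⟨h, hhdef⟩ : ∃ h : ℝ, h = T / N := ⟨_, rfl⟩
    have hhpos : 0 < h := by rw [hhdef]; positivity
    have hNh : (N:ℝ) * h = T := by rw [hhdef]; field_simp
    have hmin01 : 0 < min h₀ 1 := lt_min hh₀ one_pos
    have hhmin : h ≤ min h₀ 1 := by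
      rw [hhdef, div_le_iff₀ hNpos]
      have h1 : T / min h₀ 1 ≤ (N:ℝ) := le_trans (le_max_left _ _) hNR
      rw [div_le_iff₀ hmin01] at h1
      nlinarith
    have hhh₀ : h ≤ h₀ := hhmin.trans (min_le_left _ _)
    have hh1 : h ≤ 1 := hhmin.trans (min_le_right _ _)
    have hS : C' * h * T * exp ((L:ℝ)*T) ≤ m := by
      have h1 : C' * T^2 * exp ((L:ℝ)*T) / m ≤ (N:ℝ) := le_trans (le_max_right _ _) hNR
      rw [div_le_iff₀ hm] at h1
      have : C' * h * T * exp ((L:ℝ)*T) * (N:ℝ) = C' * T^2 * exp ((L:ℝ)*T) := by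
        rw [hhdef]; field_simp
      nlinarith
    have hmE : m ≤ exp (-(L:ℝ)) / 2 := by rw [hmdef]; exact min_le_right _ _
    have hmhalf : m ≤ 1/2 := by
      have : exp (-(L:ℝ)) ≤ 1 := by
        rw [exp_le_one_iff]; simp [L.coe_nonneg]
      linarith
    have hmeps : m ≤ ε := by rw [hmdef]; exact min_le_left _ _
    have hhT : h ≤ T := by
      rw [hhdef, div_le_iff₀ hNpos]; nlinarith [hT, hN1]
    -- choose the approximating maps
    have hgex : ∀ k : ℕ, ∃ g ∈ Ψ, ∀ x ∈ closedBall (0:(Fin D → ℝ)) (R+2),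
        ‖φ (τ + min ((k:ℝ)*h) (T - h)) h x - g x‖ ≤ C * h ^ 2 := by
      intro k
      refine happ _ ⟨le_add_of_nonneg_right (le_min (by positivity) (by linarith)), ?_⟩
        h ⟨hhpos, hhh₀⟩
      have := min_le_right ((k:ℝ)*h) (T - h)
      linarith
    choose g hgΨ hgB using hgex
    have hgB' : ∀ k : ℕ, k < N → ∀ x ∈ closedBall (0:(Fin D → ℝ)) (R+2),
        ‖φ (τ + (k:ℝ)*h) h x - g k x‖ ≤ C' * h ^ 2 := by
      intro k hkN x hxs
      have hkh : (k:ℝ)*h ≤ T - h := by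
        have : (k:ℝ) + 1 ≤ (N:ℝ) := by exact_mod_cast Nat.succ_le_of_lt hkN
        nlinarith
      have := hgB k x hxs
      rw [min_eq_left hkh] at this
      refine this.trans ?_
      have hCC' : C ≤ C' := by rw [hC'def]; exact le_max_left _ _
      nlinarith [sq_nonneg h]
    set G : ℕ → ((Fin D → ℝ) → (Fin D → ℝ)) :=
      fun n => Nat.rec id (fun k Gk => g k ∘ Gk) n with hGdef
    have hG0 : ∀ x, G 0 x = x := fun _ => rfl
    have hGs : ∀ k, G (k+1) = g k ∘ G k := fun _ => rfl
    have key : ∀ k : ℕ, k ≤ N → (1 ≤ k → G k ∈ Ψ) ∧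
        ∀ x ∈ U, dist (G k x) (φ τ ((k:ℝ)*h) x) ≤ (k:ℝ) * (C'*h^2) * exp ((L:ℝ)*((k:ℝ)*h)) := by
      intro k
      induction k with
      | zero =>
        intro _
        refine ⟨fun habs => absurd habs (by norm_num), fun x hx => ?_⟩
        rw [hG0]
        push_cast
        rw [zero_mul, hφ0, dist_self]
        rw [zero_mul, zero_mul]
      | succ k ih =>
        intro hkN
        have hkN' : k < N := Nat.lt_of_succ_le hkN
        obtain ⟨ihΨ, ihB⟩ := ih hkN'.le
        have hGmem : G (k+1) ∈ Ψ := by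
          rcases Nat.eq_zero_or_pos k with h0 | hpos
          · subst h0
            rw [hGs]
            have : g 0 ∘ G 0 = g 0 := rfl
            rw [this]
            exact hgΨ 0
          · rw [hGs]
            exact hcomp _ (ihΨ hpos) _ (hgΨ k)
        refine ⟨fun _ => hGmem, fun x hx => ?_⟩
        set z := G k x with hzdef
        set e := dist z (φ τ ((k:ℝ)*h) x) with hedef
        have he0 : 0 ≤ e := dist_nonneg
        have hkh1 : (k:ℝ)*h + h ≤ T := by
          have : ((k:ℝ) + 1) ≤ (N:ℝ) := by exact_mod_cast hkN
          nlinarith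
        have hkh0 : 0 ≤ (k:ℝ)*h := by positivity
        have hBk := ihB x hx
        have hBkS : (k:ℝ) * (C'*h^2) * exp ((L:ℝ)*((k:ℝ)*h)) ≤ C'*h*T*exp ((L:ℝ)*T) := by
          have hkhT : (k:ℝ)*h ≤ T := by linarith
          have hexp : exp ((L:ℝ)*((k:ℝ)*h)) ≤ exp ((L:ℝ)*T) := by
            apply exp_le_exp.2
            nlinarith [L.coe_nonneg]
          have p1 : 0 ≤ (T - (k:ℝ)*h) * exp ((L:ℝ)*((k:ℝ)*h)) :=
            mul_nonneg (by linarith) (exp_pos _).le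
          have p2 : 0 ≤ T * (exp ((L:ℝ)*T) - exp ((L:ℝ)*((k:ℝ)*h))) :=
            mul_nonneg (by linarith) (by linarith)
          have step : ((k:ℝ)*h) * exp ((L:ℝ)*((k:ℝ)*h)) ≤ T * exp ((L:ℝ)*T) := by nlinarith
          calc (k:ℝ) * (C'*h^2) * exp ((L:ℝ)*((k:ℝ)*h))
              = (C'*h) * (((k:ℝ)*h) * exp ((L:ℝ)*((k:ℝ)*h))) := by ring
            _ ≤ (C'*h) * (T * exp ((L:ℝ)*T)) :=
                mul_le_mul_of_nonneg_left step (mul_nonneg hC'0 hhpos.le)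
            _ = C'*h*T*exp ((L:ℝ)*T) := by ring
        have heS : e ≤ m := le_trans hBk (le_trans hBkS hS)
        have hzs : z ∈ closedBall (0:(Fin D → ℝ)) (R+2) := by
          have h1 : ‖φ τ ((k:ℝ)*h) x‖ ≤ R := hRB x hx _ ⟨hkh0, by linarith⟩
          have h2 := dist_triangle z (φ τ ((k:ℝ)*h) x) 0
          simp only [dist_zero_right] at h2
          rw [mem_closedBall, dist_zero_right]
          have he12 : e ≤ 1/2 := le_trans heS hmhalf
          have he12' : dist z (φ τ ((k:ℝ)*h) x) ≤ 1/2 := he12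
          linarith
        set v : ℝ → (Fin D → ℝ) → (Fin D → ℝ) :=
          fun t => f (τ + ((k:ℝ)*h + max 0 (min t h))) with hvdef
        have hgron := gron_aux (v := v) (s := closedBall (0:(Fin D → ℝ)) (R + 2)) (K := L)
          (y := fun t => φ τ ((k:ℝ)*h + t) x)
          (y' := fun t => f (τ + ((k:ℝ)*h + t)) (φ τ ((k:ℝ)*h + t) x))
          (w := fun t => φ (τ + (k:ℝ)*h) t z) (a := 0) (b := h) (δ := e) (η := 0) (r := 1)
          hhpos.le
          (fun t => by
            have hcm := hclamp_mem t h hhpos.le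
            refine hL _ ⟨le_add_of_nonneg_right (by linarith [hcm.1]), ?_⟩
            have := hcm.2; linarith)
          (((hcontφ τ x).comp (continuous_const.add continuous_id)).continuousOn)
          (fun t ht => by
            have h1 := hφ τ x ((k:ℝ)*h + t)
            have h2 : HasDerivAt (fun u : ℝ => (k:ℝ)*h + u) 1 t :=
              (hasDerivAt_id t).const_add ((k:ℝ)*h)
            have := HasDerivAt.scomp t h1 h2
            simpa [Function.comp_def] using this)
          (fun t ht => by
            simp only [hvdef, hclamp t h ht.1 ht.2.le, dist_self, le_refl])
          ((hcontφ (τ + (k:ℝ)*h) z).continuousOn)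
          (fun t ht => by
            have := hφ (τ + (k:ℝ)*h) z t
            have harg : τ + (k:ℝ)*h + t = τ + ((k:ℝ)*h + t) := by ring
            simp only [hvdef, hclamp t h ht.1 ht.2.le]
            rw [← harg]
            exact this)
          (fun t ht p hp => by
            have h1 : ‖φ τ ((k:ℝ)*h + t) x‖ ≤ R :=
              hRB x hx _ ⟨by linarith [ht.1], by linarith [ht.2]⟩
            have hp' : dist p (φ τ ((k:ℝ)*h + t) x) ≤ 1 := hp
            have h2 := dist_triangle p (φ τ ((k:ℝ)*h + t) x) 0
            simp only [dist_zero_right] at h2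
            rw [mem_closedBall, dist_zero_right]
            linarith)
          (by simp only [hφ0, add_zero]; exact le_rfl)
          he0 le_rfl
          (by
            rw [sub_zero, gronwallBound_ε0]
            have h1 : exp ((L:ℝ)*h) ≤ exp (L:ℝ) := by
              apply exp_le_exp.2; nlinarith [L.coe_nonneg]
            have h2 : e * exp ((L:ℝ)*h) ≤ m * exp (L:ℝ) := by
              nlinarith [exp_pos ((L:ℝ)*h), exp_pos (L:ℝ), heS]
            have h3 : m * exp (L:ℝ) ≤ 1/2 := by
              have := exp_pos (L:ℝ)
              have hEE : exp (-(L:ℝ)) * exp (L:ℝ) = 1 := by rw [← exp_add]; simp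
              nlinarith
            linarith)
        have hend := hgron h ⟨hhpos.le, le_rfl⟩
        rw [sub_zero, gronwallBound_ε0] at hend
        -- combine
        have htri : dist (G (k+1) x) (φ τ ((k:ℝ)*h + h) x) ≤
            dist (g k z) (φ (τ + (k:ℝ)*h) h z) + dist (φ (τ + (k:ℝ)*h) h z) (φ τ ((k:ℝ)*h + h) x) := by
          rw [hGs]
          exact dist_triangle _ _ _
        have hfirst : dist (g k z) (φ (τ + (k:ℝ)*h) h z) ≤ C' * h^2 := by
          rw [dist_comm, dist_eq_norm]
          exact hgB' k hkN' z hzs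
        have hx1 : ((k:ℝ)+1) * h = (k:ℝ)*h + h := by ring
        have hXeq : exp ((L:ℝ)*((k:ℝ)*h)) * exp ((L:ℝ)*h) = exp ((L:ℝ)*(((k:ℝ)+1)*h)) := by
          rw [← exp_add]; congr 1; ring
        have hX1 : 1 ≤ exp ((L:ℝ)*(((k:ℝ)+1)*h)) :=
          one_le_exp (mul_nonneg L.coe_nonneg
            (mul_nonneg (by positivity) hhpos.le))
        have hsecond : dist (φ (τ + (k:ℝ)*h) h z) (φ τ ((k:ℝ)*h + h) x) ≤
            (k:ℝ) * (C'*h^2) * exp ((L:ℝ)*((k:ℝ)*h)) * exp ((L:ℝ)*h) := by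
          refine hend.trans ?_
          exact mul_le_mul_of_nonneg_right hBk (exp_pos _).le
        push_cast
        rw [hx1]
        calc dist (G (k+1) x) (φ τ ((k:ℝ)*h + h) x)
            ≤ C' * h^2 + (k:ℝ) * (C'*h^2) * exp ((L:ℝ)*((k:ℝ)*h)) * exp ((L:ℝ)*h) := by
              have := htri
              linarith [hfirst, hsecond]
          _ ≤ ((k:ℝ)+1) * (C'*h^2) * exp ((L:ℝ)*(((k:ℝ)+1)*h)) := by
              have heq : (k:ℝ) * (C'*h^2) * exp ((L:ℝ)*((k:ℝ)*h)) * exp ((L:ℝ)*h)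
                  = (k:ℝ) * (C'*h^2) * exp ((L:ℝ)*(((k:ℝ)+1)*h)) := by
                rw [mul_assoc ((k:ℝ) * (C'*h^2)), hXeq]
              rw [heq]
              have hCh2 : 0 ≤ C' * h^2 := by positivity
              nlinarith [hX1, Nat.cast_nonneg (α := ℝ) k]
          _ = ((k:ℝ)+1) * (C'*h^2) * exp ((L:ℝ)*((k:ℝ)*h + h)) := by rw [hx1]
    obtain ⟨hΨN, hBN⟩ := key N le_rfl
    refine ⟨G N, hΨN hNge, fun x hx => ?_⟩
    have := hBN x hx
    rw [hNh] at this
    have hrw : ‖φ τ T x - G N x‖ = dist (G N x) (φ τ T x) := by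
      rw [dist_comm, dist_eq_norm]
    rw [hrw]
    refine this.trans ?_
    have hfin : (N:ℝ) * (C'*h^2) * exp ((L:ℝ)*T) = C' * h * T * exp ((L:ℝ)*T) := by
      have : (N:ℝ) * (C'*h^2) = C' * h * ((N:ℝ)*h) := by ring
      rw [this, hNh]
    rw [hfin]
    exact hS.trans hmeps
end

section
/- For D = 1, the set of compositions of the one-dimensional additive coupling modules consists only of translations x ↦ x + c; consequently the measure-preserving map ψ(x) = −x on any compact interval U of positive length cannot be approximated in L^p(U) by such networks for any 1 ≤ p < ∞. -/
open MeasureTheory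

/-- In dimension `D = 1` the additive coupling modules degenerate to
translations `x ↦ x + c`; `Trans1` is the set of all finite compositions of
such modules. -/
def Trans1 : Set (ℝ → ℝ) :=
  { g | ∃ l : List ℝ, l ≠ [] ∧
      g = l.foldl (fun h c => (fun x => x + c) ∘ h) id }

lemma trans1_foldl_eq (l : List ℝ) (h : ℝ → ℝ) (x : ℝ) :
    (l.foldl (fun h c => (fun x => x + c) ∘ h) h) x = h x + l.sum := by
  induction l generalizing h with
  | nil => simp
  | cons c tl ih =>
    simp only [List.foldl_cons, ih, Function.comp, List.sum_cons]
    ring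

/-- For `D = 1`, every composition of one-dimensional additive
coupling modules is a translation `x ↦ x + c`; consequently the
measure-preserving map `ψ(x) = −x` on a compact interval `[a,b]` with `a < b`
cannot be approximated in `L^p([a,b])` by such networks for any `1 ≤ p < ∞`. -/
theorem stmt19 (a b : ℝ) (hab : a < b) (p : ℝ) (hp : 1 ≤ p) :
    (∀ g ∈ Trans1, ∃ c : ℝ, g = fun x => x + c) ∧
    ¬ (∀ ε > 0, ∃ g ∈ Trans1,
        (∫ x in Set.Icc a b, |(-x) - g x| ^ p) ^ (1 / p) ≤ ε) := by
  have part1 : ∀ g ∈ Trans1, ∃ c : ℝ, g = fun x => x + c := by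
    rintro g ⟨l, -, rfl⟩
    exact ⟨l.sum, funext fun x => by simpa using trans1_foldl_eq l id x⟩
  refine ⟨part1, ?_⟩
  have hba : (0:ℝ) < b - a := by linarith
  set t : ℝ := (b - a) / 2 with ht
  set L : ℝ := (b - a) / 4 with hL
  have htpos : 0 < t := by positivity
  have hLpos : 0 < L := by positivity
  have hppos : (0:ℝ) < p := by linarith
  set M : ℝ := t ^ p * L with hM
  have hMpos : 0 < M := mul_pos (Real.rpow_pos_of_pos htpos p) hLpos
  -- key lower bound on the integral, uniform in c
  have key : ∀ c : ℝ, M ≤ ∫ x in Set.Icc a b, |(-x) - (x + c)| ^ p := by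
    intro c
    -- find a subinterval [u, u+L] of [a,b] on which |2x+c| ≥ t
    obtain ⟨u, hu1, hu2, hbound⟩ :
        ∃ u, a ≤ u ∧ u + L ≤ b ∧ ∀ x ∈ Set.Icc u (u + L), t ≤ |(-x) - (x + c)| := by
      by_cases hc : c ≤ -(a + b)
      · refine ⟨a, le_refl a, by simp [hL]; linarith, fun x hx => ?_⟩
        obtain ⟨hx1, hx2⟩ := hx
        have : (-x) - (x + c) ≥ t := by simp only [hL] at hx2; simp [ht]; linarith
        calc t ≤ (-x) - (x + c) := this
          _ ≤ |(-x) - (x + c)| := le_abs_self _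
      · push_neg at hc
        refine ⟨b - L, by simp [hL]; linarith, by linarith, fun x hx => ?_⟩
        obtain ⟨hx1, hx2⟩ := hx
        have : -((-x) - (x + c)) ≥ t := by simp only [hL] at hx1; simp [ht]; linarith
        calc t ≤ -((-x) - (x + c)) := this
          _ ≤ |(-x) - (x + c)| := neg_le_abs _
    set f : ℝ → ℝ := fun x => |(-x) - (x + c)| ^ p with hf
    have hcont : Continuous f := by
      apply Continuous.rpow_const
      · exact (continuous_neg.sub (continuous_id.add continuous_const)).abs
      · intro x; exact Or.inr hppos.le
    have hInt : IntegrableOn f (Set.Icc a b) := hcont.integrableOn_Icc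
    have hsub : Set.Icc u (u + L) ⊆ Set.Icc a b := Set.Icc_subset_Icc hu1 hu2
    have h1 : t ^ p * (volume (Set.Icc u (u + L))).toReal ≤ ∫ x in Set.Icc u (u + L), f x := by
      rw [mul_comm, ← smul_eq_mul]
      apply MeasureTheory.setIntegral_ge_of_const_le measurableSet_Icc
        measure_Icc_lt_top.ne
      · intro x hx
        exact Real.rpow_le_rpow htpos.le (hbound x hx) hppos.le
      · exact hInt.mono_set hsub
    have hvol : (volume (Set.Icc u (u + L))).toReal = L := by
      rw [Real.volume_Icc]; simp [ENNReal.toReal_ofReal hLpos.le]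
    have h2 : ∫ x in Set.Icc u (u + L), f x ≤ ∫ x in Set.Icc a b, f x := by
      apply setIntegral_mono_set hInt
      · filter_upwards with x
        exact Real.rpow_nonneg (abs_nonneg _) p
      · exact hsub.eventuallyLE
    calc M = t ^ p * (volume (Set.Icc u (u + L))).toReal := by rw [hvol]
      _ ≤ ∫ x in Set.Icc u (u + L), f x := h1
      _ ≤ ∫ x in Set.Icc a b, f x := h2
  -- now derive the contradiction
  intro hcontra
  set ε0 : ℝ := M ^ (1 / p) with hε0
  have hε0pos : 0 < ε0 := Real.rpow_pos_of_pos hMpos _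
  obtain ⟨g, hg, hle⟩ := hcontra (ε0 / 2) (by positivity)
  obtain ⟨c, rfl⟩ := part1 g hg
  have h3 : ε0 ≤ (∫ x in Set.Icc a b, |(-x) - (x + c)| ^ p) ^ (1 / p) :=
    Real.rpow_le_rpow hMpos.le (key c) (by positivity)
  linarith [h3.trans hle]
end
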